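/- arXiv:2005.10016 — 6 statements merged into one kernel-verified Lean document; each statement's English description precedes it below -/
import Mathlib

section
/- Let R be an integral domain and let G be a group acting on R by ring automorphisms such that the action is locally finite (i.e., the orbit of every element of R under G is finite). If R is a locally pqr domain — that is, for every prime ideal p of R there exists an element t of R such that the canonical map from R to the localization R_p realizes R_p as the localization of R away from t (at the multiplicative set of powers of t) — then the fixed ring R^G = {r ∈ R : σ(r) = r for all σ ∈ G} is also a locally pqr domain, i.e., for every prime ideal q of R^G there exists s ∈ R^G such that the localization (R^G)_q is the localization of R^G away from s. -/
/-- The fixed subring `R^G` of a group `G` acting on a commutative ring `R`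
by ring automorphisms. -/
def fixedSubring (G R : Type*) [Group G] [CommRing R] [MulSemiringAction G R] : Subring R where
  carrier := {r : R | ∀ g : G, g • r = r}
  mul_mem' := fun ha hb g => by rw [smul_mul', ha g, hb g]
  one_mem' := fun g => smul_one g
  add_mem' := fun ha hb g => by rw [smul_add, ha g, hb g]
  zero_mem' := fun g => smul_zero g
  neg_mem' := fun ha g => by rw [smul_neg, ha g]

/-- An integral domain `R` is *locally pqr* if for every prime ideal `p` of `R`,
the localization `R_p` is the localization of `R` away from a single element `t ∈ R`. -/
def IsLocallyPqr (R : Type*) [CommRing R] [IsDomain R] : Prop :=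
  ∀ (p : Ideal R) [p.IsPrime], ∃ t : R, IsLocalization.Away t (Localization.AtPrime p)

/-!
`A_p = A_t` exactly when `t ∉ p` and `t` lies in every prime not contained in `p`.
Orbit polynomials `∏ (X - σ t)` have coefficients in `R^G`, so `R` is integral over `R^G`.
Given a prime `q` of `R^G`, take `p` over it and `t` with `R_p = R_t`; as `t ∉ p`, some
non-leading coefficient `s` of the orbit polynomial of `t` is not in `p`. If `P` lies over a
prime `Q ⊄ q` of `R^G`, then so does every translate `σ⁻¹ P`, which therefore contains `t`.
Hence the whole orbit of `t` lies in `P`, the orbit polynomial is `X ^ n` modulo `P`, and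
`s ∈ P ∩ R^G = Q`; that is, `(R^G)_q = (R^G)_s`.
-/

open Polynomial

namespace Polynomial

theorem isWeaklyEisensteinAt_prod_X_sub_C {R : Type*} [CommRing R] {P : Ideal R}
    (s : Finset R) (hs : ∀ x ∈ s, x ∈ P) : (∏ x ∈ s, (X - C x)).IsWeaklyEisensteinAt P := by
  refine Finset.prod_induction _ (fun f : R[X] => f.IsWeaklyEisensteinAt P)
    (fun _ _ => IsWeaklyEisensteinAt.mul) ⟨fun hn => by simp at hn⟩ fun x hx => ⟨fun {n} hn => ?_⟩
  obtain rfl : n = 0 := by have := natDegree_X_sub_C_le x; omega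
  simpa using hs x hx

theorem Monic.exists_coeff_notMem_of_isRoot {R : Type*} [CommRing R] {f : R[X]}
    (hf : f.Monic) {x : R} (hx : f.IsRoot x) {p : Ideal R} [p.IsPrime] (hxp : x ∉ p) :
    ∃ n < f.natDegree, f.coeff n ∉ p := by
  by_contra! h
  have hf' : f.IsWeaklyEisensteinAt p := ⟨fun hn => h _ hn⟩
  exact hxp (‹p.IsPrime›.mem_of_pow_mem _
    (hf'.pow_natDegree_le_of_root_of_monic_mem hx hf _ le_rfl))

end Polynomial

theorem isLocalization_away_atPrime_iff {A : Type*} [CommRing A] (p : Ideal A) [p.IsPrime]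
    (t : A) : IsLocalization.Away t (Localization.AtPrime p) ↔
      t ∉ p ∧ ∀ P : Ideal A, P.IsPrime → ¬P ≤ p → t ∈ P := by
  have hdvd : (∀ u ∈ p.primeCompl, ∃ m ∈ Submonoid.powers t, u ∣ m) ↔
      ∀ P : Ideal A, P.IsPrime → ¬P ≤ p → t ∈ P := by
    constructor
    · intro h P hP hPp
      obtain ⟨u, huP, hup⟩ := SetLike.not_le_iff_exists.mp hPp
      obtain ⟨_, ⟨n, rfl⟩, hu⟩ := h u hup
      exact hP.mem_of_pow_mem n (P.mem_of_dvd hu huP)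
    · intro h u hu
      have : t ∈ (Ideal.span {u}).radical := by
        rw [Ideal.radical_eq_sInf, Submodule.mem_sInf]
        rintro P ⟨huP, hP⟩
        exact h P hP fun hPp => hu (hPp (huP (Ideal.mem_span_singleton_self u)))
      obtain ⟨n, hn⟩ := this
      exact ⟨t ^ n, ⟨n, rfl⟩, Ideal.mem_span_singleton.mp hn⟩
  constructor
  · intro ht
    refine ⟨(IsLocalization.AtPrime.isUnit_to_map_iff (Localization.AtPrime p) p t).mp
      (IsLocalization.map_units _ ⟨t, Submonoid.mem_powers t⟩), hdvd.mp fun u hu => ?_⟩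
    exact (IsLocalization.algebraMap_isUnit_iff (S := Localization.AtPrime p) _).mp
      (IsLocalization.map_units _ ⟨u, hu⟩)
  · rintro ⟨htp, ht⟩
    exact (IsLocalization.iff_of_le_of_exists_dvd (S := Localization.AtPrime p) _ p.primeCompl
      (Submonoid.powers_le.mpr htp) (hdvd.mpr ht)).mpr inferInstance

section OrbitPoly

variable {G R : Type*} [Group G] [CommRing R] [MulSemiringAction G R]

open MulAction

noncomputable def orbitPoly {t : R} (ht : (orbit G t).Finite) : R[X] :=
  ∏ x ∈ ht.toFinset, (X - C x)

variable {t : R} (ht : (orbit G t).Finite)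

theorem orbitPoly_monic : (orbitPoly ht).Monic :=
  monic_prod_of_monic _ _ fun _ _ => monic_X_sub_C _

theorem orbitPoly_isRoot : (orbitPoly ht).IsRoot t := by
  rw [IsRoot, orbitPoly, eval_prod]
  exact Finset.prod_eq_zero (ht.mem_toFinset.mpr (mem_orbit_self t)) (by simp)

theorem smul_orbitPoly (g : G) : g • orbitPoly ht = orbitPoly ht := by
  rw [orbitPoly, Finset.smul_prod']
  refine Finset.prod_nbij' (g • ·) (g⁻¹ • ·) ?_ ?_ ?_ ?_ ?_
  · exact fun x hx => ht.mem_toFinset.mpr (mem_orbit_of_mem_orbit g (ht.mem_toFinset.mp hx))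
  · exact fun x hx => ht.mem_toFinset.mpr (mem_orbit_of_mem_orbit g⁻¹ (ht.mem_toFinset.mp hx))
  · exact fun x _ => inv_smul_smul g x
  · exact fun x _ => smul_inv_smul g x
  · exact fun x _ => by rw [smul_sub, smul_X, smul_C]

theorem orbitPoly_coeff_mem_fixedSubring (n : ℕ) : (orbitPoly ht).coeff n ∈ fixedSubring G R :=
  fun g => by rw [← coeff_smul, smul_orbitPoly]

theorem orbitPoly_isWeaklyEisensteinAt {P : Ideal R} (hP : orbit G t ⊆ P) :
    (orbitPoly ht).IsWeaklyEisensteinAt P :=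
  isWeaklyEisensteinAt_prod_X_sub_C _ fun _ hx => hP (ht.mem_toFinset.mp hx)

end OrbitPoly

section FixedSubring

variable {G R : Type*} [Group G] [CommRing R] [MulSemiringAction G R]

theorem isIntegral_fixedSubring (hlf : ∀ r : R, (MulAction.orbit G r).Finite) :
    Algebra.IsIntegral (fixedSubring G R) R := by
  refine ⟨fun r => ?_⟩
  obtain ⟨f, hf, -, hmonic⟩ := lifts_and_natDegree_eq_and_monic
    ((lifts_iff_coeff_lifts (f := algebraMap (fixedSubring G R) R) _).mpr
      fun n => ⟨⟨_, orbitPoly_coeff_mem_fixedSubring (hlf r) n⟩, rfl⟩) (orbitPoly_monic (hlf r))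
  exact ⟨f, hmonic, by rw [eval₂_eq_eval_map, hf]; exact orbitPoly_isRoot (hlf r)⟩

theorem comap_fixedSubring_comap_smul (P : Ideal R) (g : G) :
    (P.comap (MulSemiringAction.toRingHom G R g)).comap (algebraMap (fixedSubring G R) R) =
      P.comap (algebraMap (fixedSubring G R) R) := by
  ext x
  exact iff_of_eq (congrArg (· ∈ P) (x.2 g))

end FixedSubring

/-- If `G` acts locally finitely on an integral domain `R` and `R` is a locally pqr
domain, then so is the fixed ring `R^G`. -/
theorem isLocallyPqr_fixedSubring (R : Type*) [CommRing R] [IsDomain R]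
    (G : Type*) [Group G] [MulSemiringAction G R]
    (hlf : ∀ r : R, (MulAction.orbit G r).Finite)
    (hR : IsLocallyPqr R) :
    IsLocallyPqr ↥(fixedSubring G R) := by
  have := isIntegral_fixedSubring hlf
  have lyingOver (q : Ideal (fixedSubring G R)) [q.IsPrime] :
      ∃ P : Ideal R, P.IsPrime ∧ P.comap (algebraMap (fixedSubring G R) R) = q :=
    Ideal.exists_ideal_over_prime_of_isIntegral_of_isDomain q <| by
      simp [(RingHom.injective_iff_ker_eq_bot (algebraMap (fixedSubring G R) R)).mp
        Subtype.val_injective]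
  intro q _
  obtain ⟨p, _, rfl⟩ := lyingOver q
  obtain ⟨t, ht⟩ := hR p
  obtain ⟨htp, hmem⟩ := (isLocalization_away_atPrime_iff p t).mp ht
  obtain ⟨i, hi, hcoeff⟩ :=
    (orbitPoly_monic (hlf t)).exists_coeff_notMem_of_isRoot (orbitPoly_isRoot (hlf t)) htp
  refine ⟨⟨_, orbitPoly_coeff_mem_fixedSubring (hlf t) i⟩,
    (isLocalization_away_atPrime_iff _ _).mpr ⟨hcoeff, fun Q _ hQq => ?_⟩⟩
  obtain ⟨P, _, rfl⟩ := lyingOver Q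
  refine (orbitPoly_isWeaklyEisensteinAt (hlf t) ?_).mem hi
  rintro _ ⟨g, rfl⟩
  refine hmem (P.comap (MulSemiringAction.toRingHom G R g)) (Ideal.comap_isPrime _ _) fun hle => ?_
  exact hQq (comap_fixedSubring_comap_smul P g ▸ Ideal.comap_mono hle)
end

section
/- Let R be an integral domain and let G be a group acting on R by ring automorphisms such that the action is locally finite (every G-orbit in R is finite). If R is a Strong G-domain — that is, every overring of R (every subring of the quotient field of R containing R) has the form R[1/t] for some nonzero t ∈ R, i.e., is the R-subalgebra of qf(R) generated by the inverse of some nonzero element t of R — then the fixed ring R^G is also a Strong G-domain: every subring of the quotient field of R^G containing R^G has the form R^G[1/s] for some nonzero s ∈ R^G. -/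
/-- An integral domain `R` is a *Strong G-domain* if every overring of `R`, i.e. every
subring of the quotient field of `R` containing (the image of) `R`, is of the form
`R[1/t]` for some nonzero `t ∈ R`. -/
def IsStrongGDomain (R : Type*) [CommRing R] [IsDomain R] : Prop :=
  ∀ T : Subring (FractionRing R), (algebraMap R (FractionRing R)).range ≤ T →
    ∃ t : R, t ≠ 0 ∧
      T = (Algebra.adjoin R
        ({(algebraMap R (FractionRing R) t)⁻¹} : Set (FractionRing R))).toSubring

open Polynomial MulAction

namespace StrongGAux

variable {R : Type*} [CommRing R] {G : Type*} [Group G] [MulSemiringAction G R]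

lemma mem_fixed_iff {r : R} : r ∈ fixedSubring G R ↔ ∀ g : G, g • r = r := Iff.rfl

lemma image_orbitFinset [DecidableEq R] (g : G) (r : R) (h : (orbit G r).Finite) :
    h.toFinset.image (g • ·) = h.toFinset := by
  ext y
  simp only [Finset.mem_image, Set.Finite.mem_toFinset, MulAction.mem_orbit_iff]
  constructor
  · rintro ⟨x, ⟨h', rfl⟩, rfl⟩
    exact ⟨g * h', mul_smul g h' r⟩
  · rintro ⟨h', rfl⟩
    exact ⟨g⁻¹ • (h' • r), ⟨g⁻¹ * h', mul_smul g⁻¹ h' r⟩, smul_inv_smul g _⟩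

lemma smul_orbitProd (g : G) (r : R) (h : (orbit G r).Finite) :
    g • (∏ x ∈ h.toFinset, x) = ∏ x ∈ h.toFinset, x := by
  classical
  have h1 : g • (∏ x ∈ h.toFinset, x) = ∏ x ∈ h.toFinset, g • x :=
    map_prod (MulSemiringAction.toRingHom G R g) _ _
  rw [h1]
  conv_rhs => rw [← image_orbitFinset g r h]
  rw [Finset.prod_image (fun x _ y _ hxy => MulAction.injective g hxy)]

lemma isIntegral_of_locallyFinite (hlf : ∀ r : R, (orbit G r).Finite) (r : R) :
    IsIntegral ↥(fixedSubring G R) r := by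
  classical
  set p : R[X] := ∏ x ∈ (hlf r).toFinset, (X - C x) with hp
  have hmonic : p.Monic := monic_prod_of_monic _ _ fun x _ => monic_X_sub_C x
  have hfix : ∀ g : G, p.map (MulSemiringAction.toRingHom G R g) = p := by
    intro g
    rw [hp, Polynomial.map_prod]
    have e : ∀ x ∈ (hlf r).toFinset,
        ((X : R[X]) - C x).map (MulSemiringAction.toRingHom G R g) = X - C (g • x) := by
      intro x _; rw [Polynomial.map_sub, map_X, map_C]; rfl
    rw [Finset.prod_congr rfl e]
    conv_rhs => rw [← image_orbitFinset g r (hlf r)]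
    rw [Finset.prod_image (fun x _ y _ hxy => MulAction.injective g hxy)]
  have hcoeffs : (↑p.coeffs : Set R) ⊆ (fixedSubring G R : Set R) := by
    intro a ha
    obtain ⟨n, -, rfl⟩ := Polynomial.mem_coeffs_iff.mp ha
    show ∀ g : G, g • p.coeff n = p.coeff n
    intro g
    conv_rhs => rw [← hfix g]
    rw [Polynomial.coeff_map]
    rfl
  refine ⟨p.toSubring _ hcoeffs, (monic_toSubring _ _ _).mpr hmonic, ?_⟩
  have hmap : (p.toSubring _ hcoeffs).map (Subring.subtype _) = p := map_toSubring _ _ _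
  rw [show algebraMap ↥(fixedSubring G R) R = (fixedSubring G R).subtype from rfl,
    eval₂_eq_eval_map, hmap, Polynomial.eval_prod]
  exact Finset.prod_eq_zero ((hlf r).mem_toFinset.mpr (mem_orbit_self r)) (by simp)

lemma mem_of_isIntegral_mul_eq_one {K : Type*} [Field K] {S : Subring K} {w z : K}
    (hw : w ∈ S) (hzw : z * w = 1) (hz : IsIntegral ↥S z) : z ∈ S := by
  classical
  obtain ⟨p, pm, hp⟩ := hz
  set n := p.natDegree with hn
  have hn0 : n ≠ 0 := by
    intro h
    rw [pm.natDegree_eq_zero.mp h] at hp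
    simp at hp
  rw [eval₂_eq_sum_range, ← hn, Finset.sum_range_succ, pm.coeff_natDegree, map_one,
    one_mul] at hp
  have hzn : z ^ n = -∑ i ∈ Finset.range n, algebraMap ↥S K (p.coeff i) * z ^ i :=
    eq_neg_of_add_eq_zero_right hp
  have hzwpow : ∀ i : ℕ, z ^ i * w ^ i = 1 := fun i => by rw [← mul_pow, hzw, one_pow]
  have h1 : z = z ^ n * w ^ (n - 1) := by
    have e : n = (n - 1) + 1 := by omega
    calc z = z * (z ^ (n-1) * w ^ (n-1)) := by rw [hzwpow, mul_one]
    _ = z ^ ((n-1)+1) * w ^ (n-1) := by ring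
    _ = z ^ n * w ^ (n - 1) := by rw [← e]
  have hkey : z = -∑ i ∈ Finset.range n,
      algebraMap ↥S K (p.coeff i) * w ^ (n - 1 - i) := by
    rw [h1, hzn, neg_mul, Finset.sum_mul]
    congr 1
    refine Finset.sum_congr rfl fun i hi => ?_
    have hi' : i < n := Finset.mem_range.mp hi
    have e : n - 1 = i + (n - 1 - i) := by omega
    rw [mul_assoc]
    congr 1
    conv_lhs => rw [e, pow_add, ← mul_assoc, hzwpow i, one_mul]
  rw [hkey]
  exact S.neg_mem (Subring.sum_mem _ fun i _ =>
    S.mul_mem (by exact (p.coeff i).2) (S.pow_mem hw _))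

end StrongGAux

/-- If `G` acts locally finitely on an integral domain `R` and `R` is a Strong G-domain,
then so is the fixed ring `R^G`. -/
theorem isStrongGDomain_fixedSubring (R : Type*) [CommRing R] [IsDomain R]
    (G : Type*) [Group G] [MulSemiringAction G R]
    (hlf : ∀ r : R, (MulAction.orbit G r).Finite)
    (hR : IsStrongGDomain R) :
    IsStrongGDomain ↥(fixedSubring G R) := by
  classical
  intro T hT
  -- the embedding of fraction fields
  let φ : ↥(fixedSubring G R) →+* FractionRing R :=
    (algebraMap R (FractionRing R)).comp (fixedSubring G R).subtype
  have hφ : Function.Injective φ := fun x y hxy =>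
    Subtype.val_injective (IsFractionRing.injective R (FractionRing R) hxy)
  let ι : FractionRing ↥(fixedSubring G R) →+* FractionRing R := IsFractionRing.lift hφ
  have hι : Function.Injective ι := ι.injective
  have hcomp : ∀ a : ↥(fixedSubring G R),
      ι (algebraMap ↥(fixedSubring G R) (FractionRing ↥(fixedSubring G R)) a)
        = algebraMap R (FractionRing R) ↑a := fun a => IsFractionRing.lift_algebraMap hφ a
  -- the extension of the action to the fraction field
  let σ : G → (FractionRing R →+* FractionRing R) := fun g =>
    IsFractionRing.lift
      (g := (algebraMap R (FractionRing R)).comp (MulSemiringAction.toRingHom G R g))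
      (fun x y hxy => MulAction.injective g (IsFractionRing.injective R (FractionRing R) hxy))
  have hσa : ∀ (g : G) (r : R), σ g (algebraMap R (FractionRing R) r)
      = algebraMap R (FractionRing R) (g • r) := fun g r =>
    IsFractionRing.lift_algebraMap _ r
  have hσι : ∀ (g : G) (x : FractionRing ↥(fixedSubring G R)), σ g (ι x) = ι x := by
    intro g x
    obtain ⟨a, b, hb, rfl⟩ := IsFractionRing.div_surjective (A := ↥(fixedSubring G R)) x
    rw [map_div₀, hcomp, hcomp, map_div₀, hσa, hσa,
      StrongGAux.mem_fixed_iff.mp a.2 g, StrongGAux.mem_fixed_iff.mp b.2 g]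
  -- the overring of R generated by T and R
  set T' : Subring (FractionRing R) :=
      (T.map ι) ⊔ (algebraMap R (FractionRing R)).range with hT'def
  obtain ⟨t, ht0, hT'⟩ := hR T' le_sup_right
  -- the orbit product
  set s : R := ∏ x ∈ (hlf t).toFinset, x with hs
  have hsg : ∀ g : G, g • s = s := fun g => StrongGAux.smul_orbitProd g t (hlf t)
  have hsfix : s ∈ fixedSubring G R := StrongGAux.mem_fixed_iff.mpr hsg
  have hs0 : s ≠ 0 := by
    rw [hs]
    refine Finset.prod_ne_zero_iff.mpr fun x hx => ?_
    obtain ⟨g, rfl⟩ := MulAction.mem_orbit_iff.mp ((hlf t).mem_toFinset.mp hx)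
    intro h
    exact ht0 (by simpa using congrArg (g⁻¹ • ·) h)
  obtain ⟨u, hu⟩ : t ∣ s :=
    Finset.dvd_prod_of_mem _ ((hlf t).mem_toFinset.mpr (MulAction.mem_orbit_self t))
  set sF : ↥(fixedSubring G R) := ⟨s, hsfix⟩ with hsF
  have hsK : algebraMap R (FractionRing R) s ≠ 0 := fun h =>
    hs0 (IsFractionRing.injective R (FractionRing R) (by rw [h, map_zero]))
  -- (alg t)⁻¹ ∈ T'
  have hztT' : (algebraMap R (FractionRing R) t)⁻¹ ∈ T' := by
    rw [hT']
    exact Subalgebra.mem_toSubring.mpr (Algebra.self_mem_adjoin_singleton R _)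
  -- T' is G-stable
  have hstab : ∀ g : G, T'.map (σ g) ≤ T' := by
    intro g
    rw [hT'def, Subring.map_sup]
    apply sup_le
    · rw [Subring.map_map]
      rw [show (σ g).comp ι = ι from RingHom.ext (hσι g)]
      exact le_sup_left
    · rintro z ⟨w, ⟨r, rfl⟩, rfl⟩
      exact SetLike.le_def.mp le_sup_right (RingHom.mem_range.mpr ⟨g • r, (hσa g r).symm⟩)
  -- (alg s)⁻¹ ∈ T'
  have hzsT' : (algebraMap R (FractionRing R) s)⁻¹ ∈ T' := by
    have e : (algebraMap R (FractionRing R) s)⁻¹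
        = ∏ x ∈ (hlf t).toFinset, (algebraMap R (FractionRing R) x)⁻¹ := by
      rw [hs, map_prod, ← Finset.prod_inv_distrib]
    rw [e]
    refine Subring.prod_mem _ fun x hx => ?_
    obtain ⟨g, rfl⟩ := MulAction.mem_orbit_iff.mp ((hlf t).mem_toFinset.mp hx)
    have e2 : (algebraMap R (FractionRing R) (g • t))⁻¹
        = σ g ((algebraMap R (FractionRing R) t)⁻¹) := by rw [map_inv₀, hσa]
    rw [e2]
    exact hstab g ⟨_, hztT', rfl⟩
  -- (alg t)⁻¹ lies in the adjoin of (alg s)⁻¹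
  have hzt_mem : (algebraMap R (FractionRing R) t)⁻¹
      ∈ Algebra.adjoin R ({(algebraMap R (FractionRing R) s)⁻¹} : Set (FractionRing R)) := by
    have hu0 : u ≠ 0 := fun h => hs0 (by rw [hu, h, mul_zero])
    have huK : algebraMap R (FractionRing R) u ≠ 0 := fun h =>
      hu0 (IsFractionRing.injective R (FractionRing R) (by rw [h, map_zero]))
    have e : (algebraMap R (FractionRing R) t)⁻¹
        = algebraMap R (FractionRing R) u * (algebraMap R (FractionRing R) s)⁻¹ := by
      rw [hu, map_mul, mul_inv, mul_comm ((algebraMap R (FractionRing R) t)⁻¹),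
        ← mul_assoc, mul_inv_cancel₀ huK, one_mul]
    rw [e]
    exact mul_mem (Subalgebra.algebraMap_mem _ u) (Algebra.self_mem_adjoin_singleton R _)
  have le1 : T' ≤ (Algebra.adjoin R
      ({(algebraMap R (FractionRing R) s)⁻¹} : Set (FractionRing R))).toSubring := by
    rw [hT']
    intro z hz
    rw [Subalgebra.mem_toSubring] at hz ⊢
    exact Algebra.adjoin_le_iff.mpr (Set.singleton_subset_iff.mpr hzt_mem) hz
  -- alg s ∈ T.map ι
  have hSs : algebraMap R (FractionRing R) s ∈ T.map ι :=
    ⟨algebraMap _ _ sF, hT ⟨sF, rfl⟩, hcomp sF⟩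
  -- (alg s)⁻¹ is integral over T.map ι
  have hint : IsIntegral ↥(T.map ι) ((algebraMap R (FractionRing R) s)⁻¹) := by
    refine IsIntegral.of_mem_closure'
      ((T.map ι : Set (FractionRing R)) ∪ ((algebraMap R (FractionRing R)).range : Set _))
      ?_ _ ?_
    · rintro w (hw | ⟨r, rfl⟩)
      · exact isIntegral_algebraMap (x := (⟨w, hw⟩ : ↥(T.map ι)))
      · obtain ⟨q, qm, hq⟩ := StrongGAux.isIntegral_of_locallyFinite hlf r
        let ψ : ↥(fixedSubring G R) →+* ↥(T.map ι) :=
          (ι.comp (algebraMap ↥(fixedSubring G R)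
            (FractionRing ↥(fixedSubring G R)))).codRestrict (T.map ι)
            (fun a => ⟨algebraMap _ _ a, hT ⟨a, rfl⟩, rfl⟩)
        refine ⟨q.map ψ, qm.map ψ, ?_⟩
        rw [Polynomial.eval₂_map]
        have e2 : (algebraMap ↥(T.map ι) (FractionRing R)).comp ψ
            = (algebraMap R (FractionRing R)).comp ((fixedSubring G R).subtype) := by
          ext a
          show ι (algebraMap _ _ a) = _
          rw [hcomp]
          rfl
        rw [e2, ← Polynomial.hom_eval₂]
        rw [show Polynomial.eval₂ ((fixedSubring G R).subtype) r q = 0 from hq, map_zero]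
    · have hle : T' ≤ Subring.closure
          ((T.map ι : Set (FractionRing R)) ∪ ((algebraMap R (FractionRing R)).range : Set _)) := by
        rw [hT'def]
        apply sup_le
        · exact fun z hz => Subring.subset_closure (Or.inl hz)
        · exact fun z hz => Subring.subset_closure (Or.inr hz)
      exact hle hzsT'
  have hzS : (algebraMap R (FractionRing R) s)⁻¹ ∈ T.map ι :=
    StrongGAux.mem_of_isIntegral_mul_eq_one hSs (inv_mul_cancel₀ hsK) hint
  -- hence 1/sF ∈ T
  have hyT : (algebraMap ↥(fixedSubring G R) (FractionRing ↥(fixedSubring G R)) sF)⁻¹ ∈ T := by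
    obtain ⟨y', hy', he⟩ := hzS
    have e : (algebraMap ↥(fixedSubring G R) (FractionRing ↥(fixedSubring G R)) sF)⁻¹ = y' :=
      hι (by rw [map_inv₀, hcomp]; exact he.symm)
    rw [e]; exact hy'
  -- conclusion
  refine ⟨sF, fun h => hs0 (congrArg Subtype.val h), ?_⟩
  apply le_antisymm
  · -- T ≤ adjoin
    intro x hx
    rw [Subalgebra.mem_toSubring]
    have hx' : ι x ∈ Algebra.adjoin R
        ({(algebraMap R (FractionRing R) s)⁻¹} : Set (FractionRing R)) :=
      Subalgebra.mem_toSubring.mp (le1 (SetLike.le_def.mp le_sup_left (Subring.mem_map.mpr ⟨x, hx, rfl⟩)))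
    rw [Algebra.adjoin_singleton_eq_range_aeval] at hx'
    obtain ⟨p, hp⟩ := hx'
    simp only [AlgHom.toRingHom_eq_coe, RingHom.coe_coe] at hp
    set n := p.natDegree with hn
    set r : R := ∑ i ∈ Finset.range (n+1), p.coeff i * s ^ (n - i) with hr
    have hexp : ι x = ∑ i ∈ Finset.range (n+1),
        algebraMap R (FractionRing R) (p.coeff i) * ((algebraMap R (FractionRing R) s)⁻¹) ^ i := by
      rw [← hp, Polynomial.aeval_eq_sum_range]
      exact Finset.sum_congr rfl fun i _ => by rw [Algebra.smul_def]
    have hxr : ι x * (algebraMap R (FractionRing R) s) ^ n = algebraMap R (FractionRing R) r := by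
      rw [hexp, Finset.sum_mul, hr, map_sum]
      refine Finset.sum_congr rfl fun i hi => ?_
      have hi' : i ≤ n := Nat.lt_succ_iff.mp (Finset.mem_range.mp hi)
      rw [map_mul, map_pow, mul_assoc]
      congr 1
      have e : (algebraMap R (FractionRing R) s) ^ n
          = (algebraMap R (FractionRing R) s) ^ i * (algebraMap R (FractionRing R) s) ^ (n - i) := by
        rw [← pow_add]; congr 1; omega
      rw [inv_pow, e, ← mul_assoc, inv_mul_cancel₀ (pow_ne_zero i hsK), one_mul]
    have hrfix : r ∈ fixedSubring G R := by
      refine StrongGAux.mem_fixed_iff.mpr fun g => ?_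
      apply IsFractionRing.injective R (FractionRing R)
      rw [← hσa g r, ← hxr, map_mul, hσι g x, map_pow, hσa g s, hsg g, hxr]
    have hxval : x = algebraMap _ _ (⟨r, hrfix⟩ : ↥(fixedSubring G R)) *
        ((algebraMap ↥(fixedSubring G R) (FractionRing ↥(fixedSubring G R)) sF)⁻¹) ^ n := by
      apply hι
      rw [map_mul, hcomp, map_pow, map_inv₀, hcomp, ← hxr, inv_pow, mul_assoc,
        mul_inv_cancel₀ (pow_ne_zero n hsK), mul_one]
    rw [hxval]
    exact mul_mem (Subalgebra.algebraMap_mem _ _)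
      (pow_mem (Algebra.self_mem_adjoin_singleton _ _) n)
  · -- adjoin ≤ T
    intro z hz
    rw [Subalgebra.mem_toSubring] at hz
    refine Algebra.adjoin_induction ?_ ?_ ?_ ?_ hz
    · intro w hw
      rw [Set.mem_singleton_iff] at hw
      rw [hw]; exact hyT
    · intro a; exact hT ⟨a, rfl⟩
    · intro a b _ _ ha hb; exact T.add_mem ha hb
    · intro a b _ _ ha hb; exact T.mul_mem ha hb
end

section
/- Let R be a commutative ring and let G be a group acting on R by ring automorphisms such that the action is locally finite (every G-orbit in R is finite). If R is a Hilbert ring (Jacobson ring), then the fixed ring R^G is also a Hilbert (Jacobson) ring. -/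
/-- Jacobson-ness descends along an injective integral extension. -/
theorem isJacobsonRing_of_integral_injective {S R : Type*} [CommRing S] [CommRing R]
    [Algebra S R] [Algebra.IsIntegral S R] (hinj : Function.Injective (algebraMap S R))
    (hR : IsJacobsonRing R) : IsJacobsonRing S := by
  rw [isJacobsonRing_iff_prime_eq]
  intro P hP
  obtain ⟨Q, -, hQp, hQc⟩ :=
    Ideal.exists_ideal_over_prime_of_isIntegral (S := R) P ⊥
      (fun x hx => by
        have : algebraMap S R x = 0 := by simpa using hx
        have : x = 0 := hinj (by simpa using this)
        simp [this])
  refine le_antisymm ?_ Ideal.le_jacobson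
  intro x hx
  have hxQ : algebraMap S R x ∈ Q.jacobson := by
    rw [Ideal.jacobson, Ideal.mem_sInf]
    rintro M ⟨hQM, hM⟩
    have hMc : (M.comap (algebraMap S R)).IsMaximal :=
      Ideal.isMaximal_comap_of_isIntegral_of_isMaximal M
    have hPMc : P ≤ M.comap (algebraMap S R) := hQc ▸ Ideal.comap_mono hQM
    rw [Ideal.jacobson, Ideal.mem_sInf] at hx
    exact hx ⟨hPMc, hMc⟩
  rw [hR.out hQp.isRadical] at hxQ
  rw [← hQc]
  exact hxQ

/-- If `G` acts locally finitely on a commutative ring `R` and `R` is a Hilbert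
(Jacobson) ring, then the fixed ring `R^G` is also a Hilbert (Jacobson) ring. -/
theorem isJacobsonRing_fixedSubring (R : Type*) [CommRing R]
    (G : Type*) [Group G] [MulSemiringAction G R]
    (hlf : ∀ r : R, (MulAction.orbit G r).Finite)
    (hR : IsJacobsonRing R) :
    IsJacobsonRing ↥(fixedSubring G R) := by
  have hint : Algebra.IsIntegral (fixedSubring G R) R := by
    constructor
    intro r
    classical
    set F : Finset R := (hlf r).toFinset with hF
    set p : Polynomial R := ∏ s ∈ F, (Polynomial.X - Polynomial.C s) with hp
    have hmonic : p.Monic :=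
      Polynomial.monic_prod_of_monic _ _ fun s _ => Polynomial.monic_X_sub_C s
    -- coefficients of p are fixed by G
    have hfix : ∀ n, p.coeff n ∈ fixedSubring G R := by
      intro n g
      have hmap : p.map (MulSemiringAction.toRingHom G R g) = p := by
        rw [hp, Polynomial.map_prod]
        simp only [Polynomial.map_sub, Polynomial.map_X, Polynomial.map_C]
        refine Finset.prod_nbij' (fun s => g • s) (fun s => g⁻¹ • s) ?_ ?_ ?_ ?_ ?_
        · intro s hs
          simp only [hF, Set.Finite.mem_toFinset, MulAction.mem_orbit_iff] at hs ⊢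
          obtain ⟨h, hh⟩ := hs
          exact ⟨g * h, by rw [mul_smul, hh]⟩
        · intro s hs
          simp only [hF, Set.Finite.mem_toFinset, MulAction.mem_orbit_iff] at hs ⊢
          obtain ⟨h, hh⟩ := hs
          exact ⟨g⁻¹ * h, by rw [mul_smul, hh]⟩
        · intro s _; simp [inv_smul_smul]
        · intro s _; simp [smul_inv_smul]
        · intro s _; rfl
      calc g • p.coeff n = (MulSemiringAction.toRingHom G R g) (p.coeff n) := rfl
        _ = (p.map (MulSemiringAction.toRingHom G R g)).coeff n :=
            (Polynomial.coeff_map _ _).symm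
        _ = p.coeff n := by rw [hmap]
    have hcoeffs : (↑p.coeffs : Set R) ⊆ (fixedSubring G R : Set R) := by
      intro x hx
      simp only [Finset.mem_coe, Polynomial.mem_coeffs_iff] at hx
      obtain ⟨n, _, rfl⟩ := hx
      exact hfix n
    refine ⟨p.toSubring (fixedSubring G R) hcoeffs,
      (Polynomial.monic_toSubring _ _ _).2 hmonic, ?_⟩
    have hmapts : (p.toSubring (fixedSubring G R) hcoeffs).map
        (fixedSubring G R).subtype = p := Polynomial.map_toSubring _ _ _
    have halg : algebraMap (fixedSubring G R) R = (fixedSubring G R).subtype := rfl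
    rw [Polynomial.eval₂_eq_eval_map, halg, hmapts, hp]
    have hrF : r ∈ F := by
      simp only [hF, Set.Finite.mem_toFinset]
      exact MulAction.mem_orbit_self r
    rw [Polynomial.eval_prod]
    exact Finset.prod_eq_zero hrF (by simp)
  exact isJacobsonRing_of_integral_injective (R := R) Subtype.coe_injective hR
end

section
/- Let S be an integral domain, let R be a subring of S, and let G be a group acting on S by ring automorphisms such that the action is locally finite (every G-orbit in S is finite) and σ(R) ⊆ R for all σ ∈ G. If the extension R ⊆ S is strong — that is, every prime ideal p of R is S-strong, meaning that whenever x, y ∈ S satisfy xy ∈ p then x ∈ p or y ∈ p — then the extension R^G ⊆ S^G is strong: every prime ideal q of R^G = R ∩ S^G is S^G-strong, i.e., for x, y ∈ S^G with xy ∈ q, either x ∈ q or y ∈ q. -/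
/-- If `G` acts locally finitely on an integral domain `S`, `R` is a `G`-stable subring
of `S`, and the extension `R ⊆ S` is strong (every prime ideal of `R` is `S`-strong),
then the extension `R^G ⊆ S^G` is strong: every prime ideal of `R^G = R ∩ S^G` is
`S^G`-strong. -/
theorem strongExtension_fixedSubring (S : Type*) [CommRing S] [IsDomain S]
    (R : Subring S) (G : Type*) [Group G] [MulSemiringAction G S]
    (hlf : ∀ s : S, (MulAction.orbit G s).Finite)
    (hstab : ∀ (g : G), ∀ r ∈ R, g • r ∈ R)
    (hstrong : ∀ (p : Ideal R), p.IsPrime → ∀ x y : S,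
      x * y ∈ Subtype.val '' (p : Set R) →
        x ∈ Subtype.val '' (p : Set R) ∨ y ∈ Subtype.val '' (p : Set R)) :
    ∀ (q : Ideal ↥(R ⊓ fixedSubring G S)), q.IsPrime →
      ∀ x y : S, x ∈ fixedSubring G S → y ∈ fixedSubring G S →
        x * y ∈ Subtype.val '' (q : Set ↥(R ⊓ fixedSubring G S)) →
          x ∈ Subtype.val '' (q : Set ↥(R ⊓ fixedSubring G S)) ∨
            y ∈ Subtype.val '' (q : Set ↥(R ⊓ fixedSubring G S)) := by
  classical
  set T : Subring S := R ⊓ fixedSubring G S with hT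
  intro q hq x y hx hy hxy
  haveI : q.IsPrime := hq
  letI : Algebra ↥T ↥R := (Subring.inclusion (inf_le_left : T ≤ R)).toAlgebra
  have halg : ∀ a : ↥T, algebraMap ↥T ↥R a = Subring.inclusion inf_le_left a := fun _ => rfl
  -- integrality
  have hint : Algebra.IsIntegral ↥T ↥R := by
    constructor
    intro r
    set t : Finset S := (hlf (r : S)).toFinset with ht
    have htmem : ∀ s ∈ t, s ∈ MulAction.orbit G (r : S) := by
      intro s hs
      rwa [ht, Set.Finite.mem_toFinset] at hs
    -- the big polynomial over S
    set P : Polynomial S := ∏ s ∈ t, (Polynomial.X - Polynomial.C s) with hP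
    have hPmonic : P.Monic :=
      Polynomial.monic_prod_of_monic _ _ fun _ _ => Polynomial.monic_X_sub_C _
    have hreval : P.eval (r : S) = 0 := by
      rw [hP, Polynomial.eval_prod]
      refine Finset.prod_eq_zero (i := (r : S)) ?_ (by simp)
      rw [ht, Set.Finite.mem_toFinset]
      exact MulAction.mem_orbit_self _
    -- coefficients are G-fixed
    have hsmulP : ∀ g : G, g • P = P := by
      intro g
      rw [hP, Finset.smul_prod']
      have : ∀ s ∈ t, g • (Polynomial.X - Polynomial.C s)
          = Polynomial.X - Polynomial.C (g • s) := by
        intro s _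
        rw [smul_sub, Polynomial.smul_X, Polynomial.smul_C]
      rw [Finset.prod_congr rfl this]
      refine Finset.prod_nbij' (fun s => g • s) (fun s => g⁻¹ • s) ?_ ?_ ?_ ?_ ?_
      · intro s hs
        rw [ht, Set.Finite.mem_toFinset] at hs ⊢
        obtain ⟨h, rfl⟩ := hs
        exact ⟨g * h, mul_smul g h _⟩
      · intro s hs
        rw [ht, Set.Finite.mem_toFinset] at hs ⊢
        obtain ⟨h, rfl⟩ := hs
        exact ⟨g⁻¹ * h, mul_smul g⁻¹ h _⟩
      · intro s _; exact inv_smul_smul g s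
      · intro s _; exact smul_inv_smul g s
      · intro s _; rfl
    have hfix : ∀ n, P.coeff n ∈ fixedSubring G S := by
      intro n g
      rw [← Polynomial.coeff_smul, hsmulP g]
    -- coefficients are in R
    have htR : ∀ s ∈ t, s ∈ R := by
      intro s hs
      obtain ⟨g, hg⟩ := htmem s hs
      exact hg ▸ hstab g _ r.2
    have hcoeffR : ∀ n, P.coeff n ∈ R := by
      intro n
      have : P = Polynomial.map R.subtype
          (∏ s ∈ t.attach, (Polynomial.X - Polynomial.C (⟨s.1, htR s.1 s.2⟩ : ↥R))) := by
        rw [Polynomial.map_prod, hP, ← Finset.prod_attach t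
          (fun s => Polynomial.X - Polynomial.C s)]
        refine Finset.prod_congr rfl fun s _ => ?_
        rw [Polynomial.map_sub, Polynomial.map_X, Polynomial.map_C]
        rfl
      rw [this, Polynomial.coeff_map]
      exact Subtype.coe_prop _
    have hcoeff : (↑P.coeffs : Set S) ⊆ (T : Set S) := by
      intro c hc
      simp only [Finset.coe_sort_coe, Polynomial.coeffs, Finset.mem_coe, Finset.mem_image]
        at hc
      obtain ⟨n, _, rfl⟩ := hc
      exact ⟨hcoeffR n, hfix n⟩
    refine ⟨P.toSubring T hcoeff, (Polynomial.monic_toSubring _ _ _).2 hPmonic, ?_⟩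
    have hinj : Function.Injective R.subtype := Subtype.coe_injective
    apply hinj
    have hcomp : R.subtype.comp (algebraMap ↥T ↥R) = T.subtype := by
      ext a; rfl
    rw [map_zero]
    rw [show Polynomial.eval₂ (algebraMap ↥T ↥R) r (P.toSubring T hcoeff)
      = Polynomial.eval r ((P.toSubring T hcoeff).map (algebraMap ↥T ↥R))
      from (Polynomial.eval_map _ _).symm]
    rw [Polynomial.eval_map, Polynomial.hom_eval₂, hcomp,
      Polynomial.eval₂_eq_eval_map, Polynomial.map_toSubring]
    exact hreval
  -- lying over
  have hker : RingHom.ker (algebraMap ↥T ↥R) ≤ q := by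
    intro a ha
    have : (a : S) = 0 := congrArg Subtype.val (RingHom.mem_ker.1 ha)
    have : a = 0 := Subtype.ext this
    rw [this]; exact q.zero_mem
  obtain ⟨p, hpprime, hpq⟩ :=
    Ideal.exists_ideal_over_prime_of_isIntegral_of_isDomain (S := ↥R) q hker
  -- apply strongness of p
  obtain ⟨c, hc, hcval⟩ := hxy
  have hxyp : x * y ∈ Subtype.val '' (p : Set R) := by
    refine ⟨algebraMap ↥T ↥R c, ?_, hcval⟩
    have : algebraMap ↥T ↥R c ∈ p ↔ c ∈ q := by
      rw [← hpq]; rfl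
    exact this.2 hc
  rcases hstrong p hpprime x y hxyp with h | h
  · left
    obtain ⟨a, hap, haval⟩ := h
    have haT : (a : S) ∈ T := ⟨a.2, by rw [haval]; exact hx⟩
    refine ⟨⟨(a : S), haT⟩, ?_, haval⟩
    have : algebraMap ↥T ↥R ⟨(a : S), haT⟩ = a := Subtype.ext rfl
    have h2 : algebraMap ↥T ↥R ⟨(a : S), haT⟩ ∈ p := by rw [this]; exact hap
    rw [← hpq]
    exact h2
  · right
    obtain ⟨a, hap, haval⟩ := h
    have haT : (a : S) ∈ T := ⟨a.2, by rw [haval]; exact hy⟩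
    refine ⟨⟨(a : S), haT⟩, ?_, haval⟩
    have : algebraMap ↥T ↥R ⟨(a : S), haT⟩ = a := Subtype.ext rfl
    have h2 : algebraMap ↥T ↥R ⟨(a : S), haT⟩ ∈ p := by rw [this]; exact hap
    rw [← hpq]
    exact h2
end

section
/- Let S be an integral domain, let R be a subring of S, and let G be a finite group acting on S by ring automorphisms with σ(R) ⊆ R for all σ ∈ G. Suppose (R, S) is a GD-pair: for every intermediate ring T with R ⊆ T ⊆ S, the extension R ⊆ T satisfies going-down (for all primes p₁ ⊆ p₂ of R and every prime q₂ of T with q₂ ∩ R = p₂, there exists a prime q₁ of T with q₁ ⊆ q₂ and q₁ ∩ R = p₁). Then (R^G, S^G) is also a GD-pair: for every intermediate ring T' with R^G ⊆ T' ⊆ S^G, the extension R^G ⊆ T' satisfies going-down. -/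
/-- A ring homomorphism `f : A →+* B` satisfies *going-down* if for all primes
`p₁ ⊆ p₂` of `A` and every prime `q₂` of `B` lying over `p₂`, there is a prime
`q₁ ⊆ q₂` of `B` lying over `p₁`. -/
def GoingDown {A B : Type*} [CommRing A] [CommRing B] (f : A →+* B) : Prop :=
  ∀ (p₁ p₂ : Ideal A), p₁.IsPrime → p₂.IsPrime → p₁ ≤ p₂ →
    ∀ q₂ : Ideal B, q₂.IsPrime → q₂.comap f = p₂ →
      ∃ q₁ : Ideal B, q₁.IsPrime ∧ q₁ ≤ q₂ ∧ q₁.comap f = p₁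

open Polynomial MulSemiringAction Pointwise

section GoingDown

variable {A B C : Type*} [CommRing A] [CommRing B] [CommRing C]

theorem goingDown_algebraMap [Algebra A B] [Algebra.HasGoingDown A B] :
    GoingDown (algebraMap A B) := by
  intro p₁ p₂ _ _ hp q₂ _ hq₂
  have : q₂.LiesOver p₂ := ⟨hq₂.symm⟩
  obtain ⟨q₁, hle, hq₁, hq₁p⟩ := Ideal.exists_ideal_le_liesOver_of_le q₂ hp
  exact ⟨q₁, hq₁, hle, hq₁p.over.symm⟩

theorem GoingDown.comp {f : A →+* B} {g : B →+* C} (hg : GoingDown g) (hf : GoingDown f) :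
    GoingDown (g.comp f) := by
  intro p₁ p₂ hp₁ hp₂ hp r₂ hr₂ hr₂p
  obtain ⟨q₁, hq₁, hq, hq₁p⟩ :=
    hf p₁ p₂ hp₁ hp₂ hp (r₂.comap g) (hr₂.comap g) (by rw [Ideal.comap_comap, hr₂p])
  obtain ⟨r₁, hr₁, hr, hr₁q⟩ := hg q₁ _ hq₁ (hr₂.comap g) hq r₂ hr₂ rfl
  exact ⟨r₁, hr₁, hr, by rw [← Ideal.comap_comap, hr₁q, hq₁p]⟩

theorem GoingDown.of_comp {f : A →+* B} {g : B →+* C} (hgf : GoingDown (g.comp f))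
    (hg : Function.Surjective (PrimeSpectrum.comap g)) : GoingDown f := by
  intro p₁ p₂ hp₁ hp₂ hp q₂ hq₂ hq₂p
  obtain ⟨⟨r₂, hr₂⟩, hr₂q⟩ := hg ⟨q₂, hq₂⟩
  have hr₂q : r₂.comap g = q₂ := congrArg PrimeSpectrum.asIdeal hr₂q
  obtain ⟨r₁, hr₁, hr, hr₁p⟩ :=
    hgf p₁ p₂ hp₁ hp₂ hp r₂ hr₂ (by rw [← Ideal.comap_comap, hr₂q, hq₂p])
  exact ⟨r₁.comap g, hr₁.comap g, hr₂q ▸ Ideal.comap_mono hr, by rw [Ideal.comap_comap, hr₁p]⟩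

end GoingDown

theorem Subring.isIntegral_inclusion {S : Type*} [CommRing S] {A B : Subring S} (h : A ≤ B)
    (hB : ∀ x ∈ B, IsIntegral A x) : (Subring.inclusion h).IsIntegral := fun x => by
  obtain ⟨p, hp, hpx⟩ := hB x x.2
  refine ⟨p, hp, Subtype.val_injective ?_⟩
  change B.subtype (p.eval₂ (Subring.inclusion h) x) = 0
  rw [hom_eval₂]
  exact hpx

/-- Going-up produces primes `P₁ ≤ P₂` of `B` over `p ≤ Q.under A`; since `G` acts transitively
on the primes over `Q.under A`, some `g` moves `P₂` to `Q`, and `g • P₁` is the prime sought. -/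
theorem Algebra.IsInvariant.hasGoingDown (A B G : Type*) [CommRing A] [CommRing B] [Algebra A B]
    [FaithfulSMul A B] [Group G] [Finite G] [MulSemiringAction G B] [SMulCommClass G A B]
    [Algebra.IsInvariant A B G] : Algebra.HasGoingDown A B where
  exists_ideal_le_liesOver_of_lt {p} _ Q _ hpQ := by
    have := Algebra.IsInvariant.isIntegral A B G
    obtain ⟨P₁, -, hP₁, hP₁p⟩ := Ideal.exists_ideal_over_prime_of_isIntegral p (⊥ : Ideal B)
      (by simp [Ideal.comap_bot_of_injective _ (FaithfulSMul.algebraMap_injective A B)])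
    obtain ⟨P₂, hP₁₂, hP₂, hP₂Q⟩ :=
      Ideal.exists_ideal_over_prime_of_isIntegral (Q.under A) P₁ (hP₁p ▸ hpQ.le)
    obtain ⟨g, rfl⟩ := Algebra.IsInvariant.exists_smul_of_under_eq A B G P₂ Q hP₂Q
    refine ⟨g • P₁, Ideal.pointwise_smul_le_pointwise_smul_iff.mpr hP₁₂, hP₁.smul g, ⟨?_⟩⟩
    rw [Ideal.under_smul]
    exact hP₁p.symm

section FixedSubring

variable {S G : Type*} [CommRing S] [Group G] [MulSemiringAction G S]
  {R : Subring S} [IsInvariantSubring G R]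

/-- `x` is a root of the monic `charpoly G x = ∏ g, (X - C (g • x))`, whose coefficients lie in `R`
and are `G`-fixed. -/
theorem isIntegral_of_mem_of_inf_fixedSubring_le [Fintype G] {W : Subring S}
    (hW : R ⊓ fixedSubring G S ≤ W) {x : S} (hx : x ∈ R) : IsIntegral W x := by
  have hmap : (charpoly G (⟨x, hx⟩ : R)).map R.subtype = charpoly G x := by
    simp only [charpoly_eq, Polynomial.map_prod, Polynomial.map_sub, map_X, map_C]
    rfl
  have hlifts : charpoly G x ∈ lifts (algebraMap W S) := by
    refine (lifts_iff_coeff_lifts _).mpr fun n => ⟨⟨_, hW ⟨?_, smul_coeff_charpoly x n⟩⟩, rfl⟩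
    rw [← hmap, coeff_map]
    exact SetLike.coe_mem _
  obtain ⟨q, hq, -, hqm⟩ := lifts_and_natDegree_eq_and_monic hlifts (monic_charpoly G x)
  exact ⟨q, hqm, by rw [← eval_map, hq, eval_charpoly]⟩

theorem isIntegral_of_mem_sup_of_inf_fixedSubring_le [Fintype G] {W : Subring S}
    (hW : R ⊓ fixedSubring G S ≤ W) {x : S} (hx : x ∈ R ⊔ W) : IsIntegral W x := by
  refine (sup_le (fun y hy => ?_) (fun y hy => ?_) : R ⊔ W ≤ (integralClosure W S).toSubring) hx
  · exact isIntegral_of_mem_of_inf_fixedSubring_le hW hy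
  · exact isIntegral_algebraMap (x := (⟨y, hy⟩ : W))

variable (R) in
theorem goingDown_inclusion_inf_fixedSubring [Finite G] :
    GoingDown (Subring.inclusion (inf_le_left : R ⊓ fixedSubring G S ≤ R)) := by
  let := (Subring.inclusion (inf_le_left : R ⊓ fixedSubring G S ≤ R)).toAlgebra
  have : SMulCommClass G ↥(R ⊓ fixedSubring G S) R := ⟨fun g a x => Subtype.ext <| by
    change g • ((a : S) * x) = a * (g • (x : S))
    rw [smul_mul', a.2.2 g]⟩
  have : Algebra.IsInvariant ↥(R ⊓ fixedSubring G S) R G :=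
    ⟨fun x hx => ⟨⟨x, x.2, fun g => congrArg Subtype.val (hx g)⟩, rfl⟩⟩
  have : FaithfulSMul ↥(R ⊓ fixedSubring G S) R :=
    (faithfulSMul_iff_algebraMap_injective _ _).mpr (Subring.inclusion_injective _)
  have := Algebra.IsInvariant.hasGoingDown ↥(R ⊓ fixedSubring G S) R G
  exact goingDown_algebraMap

end FixedSubring

theorem gdPair_fixedSubring_general (S : Type*) [CommRing S]
    (R : Subring S) (G : Type*) [Group G] [Fintype G] [MulSemiringAction G S]
    (hstab : ∀ (g : G), ∀ r ∈ R, g • r ∈ R)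
    (hGD : ∀ (T : Subring S) (hRT : R ≤ T), GoingDown (Subring.inclusion hRT)) :
    ∀ (T' : Subring S) (h₁ : R ⊓ fixedSubring G S ≤ T'), T' ≤ fixedSubring G S →
      GoingDown (Subring.inclusion h₁) := by
  intro T' h₁ _
  have : IsInvariantSubring G R := ⟨hstab⟩
  have hT' : T' ≤ R ⊔ T' := le_sup_right
  have hcomp : GoingDown ((Subring.inclusion hT').comp (Subring.inclusion h₁)) :=
    (hGD _ le_sup_left).comp (goingDown_inclusion_inf_fixedSubring R)
  have hintegral : (Subring.inclusion hT').IsIntegral :=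
    Subring.isIntegral_inclusion hT' fun _ => isIntegral_of_mem_sup_of_inf_fixedSubring_le h₁
  exact hcomp.of_comp (hintegral.comap_surjective (Subring.inclusion_injective hT'))

/-- If `G` is a finite group acting on an integral domain `S`, `R` is a `G`-stable
subring of `S`, and `(R, S)` is a GD-pair (i.e. `R ⊆ T` satisfies going-down for every
intermediate ring `R ⊆ T ⊆ S`), then `(R^G, S^G)` is also a GD-pair. -/
theorem gdPair_fixedSubring (S : Type*) [CommRing S] [IsDomain S]
    (R : Subring S) (G : Type*) [Group G] [Fintype G] [MulSemiringAction G S]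
    (hstab : ∀ (g : G), ∀ r ∈ R, g • r ∈ R)
    (hGD : ∀ (T : Subring S) (hRT : R ≤ T), GoingDown (Subring.inclusion hRT)) :
    ∀ (T' : Subring S) (h₁ : R ⊓ fixedSubring G S ≤ T'), T' ≤ fixedSubring G S →
      GoingDown (Subring.inclusion h₁) :=
  gdPair_fixedSubring_general S R G hstab hGD
end

section
/- Let S be an integral domain, let R be a subring of S, and let G be a finite group acting on S by ring automorphisms with σ(R) ⊆ R for all σ ∈ G, such that the order |G| of G is a unit in R. Then the map T ↦ RT, sending an intermediate ring T with R^G ⊆ T ⊆ S^G to the subring RT of S generated by R and T, is injective; in particular, if T₁ ⊆ T₂ are intermediate rings between R^G = R ∩ S^G and S^G with RT₁ = RT₂, then T₁ = T₂. -/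
/-- If `G` is a finite group acting on an integral domain `S` and `R` is a `G`-stable
subring of `S` in which `|G|` is a unit, then the map `T ↦ RT` (compositum inside `S`)
from intermediate rings between `R^G = R ∩ S^G` and `S^G` to intermediate rings
between `R` and `S` is injective. -/
theorem compositum_injective_fixedSubring (S : Type*) [CommRing S] [IsDomain S]
    (R : Subring S) (G : Type*) [Group G] [Fintype G] [MulSemiringAction G S]
    (hstab : ∀ (g : G), ∀ r ∈ R, g • r ∈ R)
    (hunit : IsUnit ((Fintype.card G : ℕ) : ↥R)) :
    ∀ T₁ T₂ : Subring S,
      R ⊓ fixedSubring G S ≤ T₁ → T₁ ≤ fixedSubring G S →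
      R ⊓ fixedSubring G S ≤ T₂ → T₂ ≤ fixedSubring G S →
      R ⊔ T₁ = R ⊔ T₂ → T₁ = T₂ := by
  obtain ⟨v, hv⟩ := hunit
  set n : ℕ := Fintype.card G with hn
  set U : S := (((v⁻¹ : Rˣ) : ↥R) : S) with hU
  have hUmem : U ∈ R := SetLike.coe_mem _
  have hUN : U * ((n : ℕ) : S) = 1 := by
    have h1 : ((v⁻¹ : Rˣ) : ↥R) * ((n : ℕ) : ↥R) = 1 := by
      rw [← hv]; exact v.inv_mul
    have := congrArg (R.subtype) h1
    simpa [map_natCast R.subtype] using this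
  have hNfix : ∀ g : G, g • ((n : ℕ) : S) = ((n : ℕ) : S) := fun g =>
    map_natCast (MulSemiringAction.toRingHom G S g) n
  have hUfix : ∀ g : G, g • U = U := by
    intro g
    calc g • U = (g • U) * (U * ((n : ℕ) : S)) := by rw [hUN, mul_one]
      _ = U * ((g • U) * (g • ((n : ℕ) : S))) := by rw [hNfix]; ring
      _ = U * (g • (U * ((n : ℕ) : S))) := by rw [smul_mul']
      _ = U := by rw [hUN, smul_one, mul_one]
  set π : S → S := fun s => U * ∑ g : G, g • s with hπ
  have hπfixed : ∀ s ∈ fixedSubring G S, π s = s := by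
    intro s hs
    have : ∑ g : G, g • s = ((n : ℕ) : S) * s := by
      rw [Finset.sum_congr rfl (fun g _ => hs g)]
      simp [hn, nsmul_eq_mul]
    simp only [hπ, this, ← mul_assoc, hUN, one_mul]
  have hπR : ∀ r ∈ R, π r ∈ R ⊓ fixedSubring G S := by
    intro r hr
    constructor
    · exact R.mul_mem hUmem (R.sum_mem (fun g _ => hstab g r hr))
    · intro h
      simp only [hπ, smul_mul', Finset.smul_sum, hUfix h, smul_smul]
      congr 1
      exact Fintype.sum_equiv (Equiv.mulLeft h) _ _ (fun g => rfl)
  have hπmulfix : ∀ t ∈ fixedSubring G S, ∀ x : S, π (t * x) = t * π x := by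
    intro t ht x
    simp only [hπ, smul_mul']
    rw [Finset.sum_congr rfl (fun g _ => by rw [ht g]), ← Finset.mul_sum]
    ring
  have key : ∀ T : Subring S, R ⊓ fixedSubring G S ≤ T → T ≤ fixedSubring G S →
      ∀ x ∈ R ⊔ T, π x ∈ T := by
    intro T hRT hT x hx
    have hx' : x ∈ Algebra.adjoin ↥T (R : Set S) := by
      have hle : R ⊔ T ≤ (Algebra.adjoin ↥T (R : Set S)).toSubring := by
        rw [sup_le_iff]
        constructor
        · intro r hr; exact Algebra.subset_adjoin hr
        · intro t ht
          exact (Algebra.adjoin ↥T (R : Set S)).algebraMap_mem ⟨t, ht⟩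
      exact hle hx
    rw [← Subalgebra.mem_toSubmodule, Algebra.adjoin_eq_span] at hx'
    clear hx
    induction hx' using Submodule.span_induction with
    | mem y hy =>
      have hyR : y ∈ R := by
        have : Submonoid.closure (R : Set S) ≤ R.toSubmonoid :=
          Submonoid.closure_le.2 le_rfl
        exact this hy
      exact hRT (hπR y hyR)
    | zero => simpa [hπ] using T.zero_mem
    | add a b _ _ ha hb =>
      have : π (a + b) = π a + π b := by
        simp [hπ, smul_add, Finset.sum_add_distrib, mul_add]
      rw [this]; exact T.add_mem ha hb
    | smul a y _ hy =>
      have hsm : a • y = (a : S) * y := Algebra.smul_def a y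
      rw [hsm, hπmulfix (a : S) (hT a.2) y]
      exact T.mul_mem a.2 hy
  intro T₁ T₂ h₁ h₁' h₂ h₂' heq
  apply le_antisymm
  · intro t ht
    have htmem : t ∈ R ⊔ T₂ := by
      rw [← heq]; exact le_sup_right (α := Subring S) ht
    have := key T₂ h₂ h₂' t htmem
    rwa [hπfixed t (h₁' ht)] at this
  · intro t ht
    have htmem : t ∈ R ⊔ T₁ := by
      rw [heq]; exact le_sup_right (α := Subring S) ht
    have := key T₁ h₁ h₁' t htmem
    rwa [hπfixed t (h₂' ht)] at this
end
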